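/- arXiv:1310.1041 — 5 statements merged into one kernel-verified Lean document; each statement's English description precedes it below -/
import Mathlib

section
/- Let b = (1 - e^{-1})^{-1}. Suppose k₀ ≥ b is a real number and (q_n)_{n≥0} is a sequence of nonnegative real numbers satisfying q₀ ≤ e^{-k₀} and, for every n ≥ 0, q_{n+1} ≤ q_n² + exp(-2^{n+1}·(√n + √k₀)²). Then q_n ≤ exp(-(k₀ - b)·2^n) for all n ≥ 0. -/
/-! Writing `y = 2 e^{-k₀}`, the bounds `Bₙ = y^{2ⁿ} / 2` satisfy `Bₙ² = B_{n+1} / 2`, so they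
propagate through `q_{n+1} ≤ qₙ² + εₙ` as soon as `εₙ ≤ B_{n+1} / 2`. Since `k₀ ≤ (√n + √k₀)²`,
the error term is at most `e^{-k₀ 2^{n+1}} ≤ y^{2^{n+1}} / 4`. Finally
`Bₙ ≤ exp((log 2 - k₀) 2ⁿ)` and `log 2 < 1 ≤ (1 - e⁻¹)⁻¹`. -/

open Real

lemma le_pow_two_pow_div_two_of_le_sq_add {q ε : ℕ → ℝ} {y : ℝ} (hq : ∀ n, 0 ≤ q n)
    (h0 : q 0 ≤ y / 2) (hε : ∀ n, ε n ≤ y ^ 2 ^ (n + 1) / 4)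
    (hrec : ∀ n, q (n + 1) ≤ q n ^ 2 + ε n) (n : ℕ) : q n ≤ y ^ 2 ^ n / 2 := by
  induction n with
  | zero => simpa using h0
  | succ n ih =>
    have hsq : q n ^ 2 ≤ (y ^ 2 ^ n / 2) ^ 2 := pow_le_pow_left₀ (hq n) ih 2
    calc q (n + 1) ≤ (y ^ 2 ^ n / 2) ^ 2 + y ^ 2 ^ (n + 1) / 4 := by linarith [hrec n, hε n]
      _ = y ^ 2 ^ (n + 1) / 2 := by ring

lemma exp_neg_two_pow_mul_sq_add_sqrt_le {k s : ℝ} (hk : 0 ≤ k) (hs : 0 ≤ s) (n : ℕ) :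
    exp (-(2 ^ (n + 1) * (s + √k) ^ 2)) ≤ (2 * exp (-k)) ^ 2 ^ (n + 1) / 4 := by
  have hk_le : k ≤ (s + √k) ^ 2 := by nlinarith [sq_sqrt hk, sqrt_nonneg k]
  have hfour : (4 : ℝ) ≤ 2 ^ 2 ^ (n + 1) := by
    calc (4 : ℝ) = 2 ^ 2 := by norm_num
      _ ≤ 2 ^ 2 ^ (n + 1) :=
        pow_le_pow_right₀ one_le_two (Nat.le_self_pow (Nat.succ_ne_zero n) 2)
  calc exp (-(2 ^ (n + 1) * (s + √k) ^ 2)) ≤ exp (-k) ^ 2 ^ (n + 1) := by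
        rw [← exp_nat_mul, exp_le_exp]
        push_cast
        nlinarith [pow_pos (two_pos (α := ℝ)) (n + 1)]
    _ ≤ (2 * exp (-k)) ^ 2 ^ (n + 1) / 4 := by
        rw [mul_pow]
        nlinarith [pow_pos (exp_pos (-k)) (2 ^ (n + 1))]

lemma one_le_inv_one_sub_exp_neg_one : 1 ≤ (1 - exp (-1))⁻¹ := by
  have hlt : exp (-1) < 1 := exp_lt_one_iff.mpr (by norm_num)
  rw [one_le_inv₀ (by linarith)]
  linarith [exp_pos (-1)]

/-- Analytic core of Proposition 3.2: propagation of the recursive bounds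
`q_{n+1} ≤ q_n² + exp(-2^{n+1}(√n + √k₀)²)` along the renormalization scheme,
where `b = (1 - e⁻¹)⁻¹`. -/
theorem stmt0 (k₀ : ℝ) (q : ℕ → ℝ)
    (hk₀ : (1 - Real.exp (-1))⁻¹ ≤ k₀)
    (hq : ∀ n, 0 ≤ q n)
    (h0 : q 0 ≤ Real.exp (-k₀))
    (hrec : ∀ n : ℕ, q (n + 1) ≤ (q n) ^ 2 +
      Real.exp (-(2 ^ (n + 1) * (Real.sqrt n + Real.sqrt k₀) ^ 2))) :
    ∀ n : ℕ, q n ≤ Real.exp (-((k₀ - (1 - Real.exp (-1))⁻¹) * 2 ^ n)) := by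
  intro n
  have hb := one_le_inv_one_sub_exp_neg_one
  have hk₀_nonneg : 0 ≤ k₀ := by linarith
  have hy : 2 * exp (-k₀) = exp (log 2 - k₀) := by
    rw [sub_eq_add_neg, exp_add, exp_log two_pos]
  have hq_le := le_pow_two_pow_div_two_of_le_sq_add hq (by linarith) (fun m ↦
    exp_neg_two_pow_mul_sq_add_sqrt_le hk₀_nonneg (sqrt_nonneg (m : ℝ)) m) hrec n
  calc q n ≤ (2 * exp (-k₀)) ^ 2 ^ n / 2 := hq_le
    _ ≤ exp (log 2 - k₀) ^ 2 ^ n := by rw [hy]; linarith [pow_pos (exp_pos (log 2 - k₀)) (2 ^ n)]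
    _ ≤ exp (-((k₀ - (1 - exp (-1))⁻¹) * 2 ^ n)) := by
        rw [← exp_nat_mul, exp_le_exp]
        push_cast
        nlinarith [log_two_lt_d9, pow_pos (two_pos (α := ℝ)) n]
end

section
/- Let ε > 0 and c ≥ 1 be real numbers, let (l_n)_{n≥0} be a sequence of reals with l_n ≥ 1, and let (δ_n)_{n≥0}, (ε_n)_{n≥0} be sequences of nonnegative reals such that: (i) Σ_{n≥0} δ_n ≤ ε; (ii) 2·c·l_n^{-4}·l_{n+1}³ ≤ 1 for all n ≥ 0; (iii) c·l_n²·ε_n ≤ (2·l_{n+1}³)^{-1} for all n ≥ 0. Let q_n : ℝ → [0, ∞), n ≥ 0, be nondecreasing functions satisfying q_{n+1}(h') ≤ c·l_n²·(q_n(h' + δ_n)² + ε_n) for every n ≥ 0 and every h' ∈ ℝ. If h ∈ ℝ is such that q₀(h + ε) ≤ l₀^{-3}, then q_n(h) ≤ l_n^{-3} for all n ≥ 0. -/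
/-!
Shifting the argument by the partial sums of the `δ_k` makes the recursion exact: the bound
`q_n(h + ε - ∑_{k<n} δ_k) ≤ l_n⁻³` propagates by induction, since `c l_n² (l_n⁻⁶ + ε_n)` is at most
`l_{n+1}⁻³ / 2 + l_{n+1}⁻³ / 2` by the two compatibility conditions. As the partial sums never
exceed `ε`, monotonicity of `q_n` then brings the argument back down to `h`.
-/

open Finset

lemma mul_sq_add_le_inv_pow_three {c l l' e x : ℝ} (hc : 0 ≤ c) (hl : 0 < l) (hl' : 0 < l')
    (hx₀ : 0 ≤ x) (hx : x ≤ (l ^ 3)⁻¹) (hll : 2 * c * (l ^ 4)⁻¹ * l' ^ 3 ≤ 1)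
    (hee : c * l ^ 2 * e ≤ (2 * l' ^ 3)⁻¹) :
    c * l ^ 2 * (x ^ 2 + e) ≤ (l' ^ 3)⁻¹ := by
  have hsq : c * l ^ 2 * x ^ 2 ≤ (2 * l' ^ 3)⁻¹ :=
    calc c * l ^ 2 * x ^ 2 ≤ c * l ^ 2 * ((l ^ 3)⁻¹) ^ 2 := by gcongr
      _ = c * (l ^ 4)⁻¹ := by field_simp
      _ ≤ (2 * l' ^ 3)⁻¹ := by
        rw [inv_eq_one_div (2 * l' ^ 3), le_div_iff₀ (by positivity)]
        linarith
  calc c * l ^ 2 * (x ^ 2 + e) = c * l ^ 2 * x ^ 2 + c * l ^ 2 * e := by ring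
    _ ≤ (2 * l' ^ 3)⁻¹ + (2 * l' ^ 3)⁻¹ := add_le_add hsq hee
    _ = (l' ^ 3)⁻¹ := by field_simp; norm_num

lemma le_inv_pow_three_of_recursive_bound (c : ℝ) (hc : 0 ≤ c) (l δ e : ℕ → ℝ)
    (hl : ∀ n, 0 < l n) (hll : ∀ n, 2 * c * ((l n) ^ 4)⁻¹ * (l (n + 1)) ^ 3 ≤ 1)
    (hee : ∀ n, c * (l n) ^ 2 * e n ≤ (2 * (l (n + 1)) ^ 3)⁻¹)
    (q : ℕ → ℝ → ℝ) (hq0 : ∀ n h, 0 ≤ q n h)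
    (hrec : ∀ n h', q (n + 1) h' ≤ c * (l n) ^ 2 * ((q n (h' + δ n)) ^ 2 + e n))
    {a : ℝ} (hseed : q 0 a ≤ ((l 0) ^ 3)⁻¹) (n : ℕ) :
    q n (a - ∑ k ∈ range n, δ k) ≤ ((l n) ^ 3)⁻¹ := by
  induction n with
  | zero => simpa using hseed
  | succ n ih =>
    have hshift : a - ∑ k ∈ range (n + 1), δ k + δ n = a - ∑ k ∈ range n, δ k := by
      rw [sum_range_succ]; ring
    calc q (n + 1) (a - ∑ k ∈ range (n + 1), δ k)
        ≤ c * (l n) ^ 2 * ((q n (a - ∑ k ∈ range n, δ k)) ^ 2 + e n) := by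
          simpa only [hshift] using hrec n (a - ∑ k ∈ range (n + 1), δ k)
      _ ≤ ((l (n + 1)) ^ 3)⁻¹ :=
          mul_sq_add_le_inv_pow_three hc (hl n) (hl (n + 1)) (hq0 n _) ih (hll n) (hee n)

theorem stmt1_general (ε c : ℝ) (hc : 1 ≤ c)
    (l δ e : ℕ → ℝ)
    (hl : ∀ n, 1 ≤ l n) (hδ : ∀ n, 0 ≤ δ n)
    (hδsum : Summable δ) (hδε : ∑' n, δ n ≤ ε)
    (hll : ∀ n, 2 * c * ((l n) ^ 4)⁻¹ * (l (n + 1)) ^ 3 ≤ 1)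
    (hee : ∀ n, c * (l n) ^ 2 * e n ≤ (2 * (l (n + 1)) ^ 3)⁻¹)
    (q : ℕ → ℝ → ℝ)
    (hq0 : ∀ n h, 0 ≤ q n h)
    (hmono : ∀ n, Monotone (q n))
    (hrec : ∀ n h', q (n + 1) h' ≤ c * (l n) ^ 2 * ((q n (h' + δ n)) ^ 2 + e n))
    (h : ℝ) (hseed : q 0 (h + ε) ≤ ((l 0) ^ 3)⁻¹) :
    ∀ n, q n h ≤ ((l n) ^ 3)⁻¹ := by
  intro n
  have hpartial : ∑ k ∈ range n, δ k ≤ ε :=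
    (hδsum.sum_le_tsum _ fun k _ => hδ k).trans hδε
  have hshifted := le_inv_pow_three_of_recursive_bound c (zero_le_one.trans hc) l δ e
    (fun n => zero_lt_one.trans_le (hl n)) hll hee q hq0 hrec hseed n
  exact (hmono n (by linarith)).trans hshifted

/-- Analytic core of Lemma 4.2: propagation of the recursive bounds
`q_{n+1}(h') ≤ c l_n² (q_n(h' + δ_n)² + ε_n)` for the nondecreasing functions `q_n`,
under the stated summability and compatibility conditions. -/
theorem stmt1 (ε c : ℝ) (hε : 0 < ε) (hc : 1 ≤ c)
    (l δ e : ℕ → ℝ)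
    (hl : ∀ n, 1 ≤ l n) (hδ : ∀ n, 0 ≤ δ n) (he : ∀ n, 0 ≤ e n)
    (hδsum : Summable δ) (hδε : ∑' n, δ n ≤ ε)
    (hll : ∀ n, 2 * c * ((l n) ^ 4)⁻¹ * (l (n + 1)) ^ 3 ≤ 1)
    (hee : ∀ n, c * (l n) ^ 2 * e n ≤ (2 * (l (n + 1)) ^ 3)⁻¹)
    (q : ℕ → ℝ → ℝ)
    (hq0 : ∀ n h, 0 ≤ q n h)
    (hmono : ∀ n, Monotone (q n))
    (hrec : ∀ n h', q (n + 1) h' ≤ c * (l n) ^ 2 * ((q n (h' + δ n)) ^ 2 + e n))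
    (h : ℝ) (hseed : q 0 (h + ε) ≤ ((l 0) ^ 3)⁻¹) :
    ∀ n, q n h ≤ ((l n) ^ 3)⁻¹ :=
  stmt1_general ε c hc l δ e hl hδ hδsum hδε hll hee q hq0 hmono hrec h hseed
end

section
/- Let d ≥ 3 be an integer and let K ⊆ {0,1}^d. Suppose C ⊆ K and D ⊆ K are nonempty sets such that the closure of C in H = {0,1}^d and the closure of D in H each have cardinality at least (1 - d^{-2})·2^d. Then there exist x ∈ C and y ∈ D that are joined by a path of the hypercube graph all of whose vertices lie in K; in particular, C and D lie in the same connected component of the subgraph induced on K. -/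
/-- The hypercube graph on `{0,1}^d`: two vertices are adjacent iff they differ in
exactly one coordinate. -/
def hypercubeGraph (d : ℕ) : SimpleGraph (Fin d → Bool) where
  Adj x y := ∃! i, x i ≠ y i
  symm := by
    constructor
    rintro x y ⟨i, hi, hu⟩
    exact ⟨i, Ne.symm hi, fun j hj => hu j (Ne.symm hj)⟩
  loopless := by
    constructor
    rintro x ⟨i, hi, -⟩
    exact hi rfl

/-- The closure of `C` in the hypercube: `C` together with all vertices adjacent to `C`. -/
def hcClosure (d : ℕ) (C : Set (Fin d → Bool)) : Set (Fin d → Bool) :=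
  C ∪ {v | ∃ u ∈ C, (hypercubeGraph d).Adj u v}

/-!
If no vertex of `C` equals or is adjacent to a vertex of `D`, then the closure of `C` and the
set `D` are disjoint, so `|cl C| + |D| ≤ 2^d`. Since every vertex has `d` neighbours,
`|cl D| ≤ (d + 1)|D|`, hence `|D| ≥ (d - 1) 2^d / d²`, and then
`|cl C| + |D| ≥ (d² + d - 2) 2^d / d² > 2^d` as soon as `d > 2`.
-/

lemma hypercubeGraph.exists_eq_update_of_adj {d : ℕ} {u v : Fin d → Bool}
    (h : (hypercubeGraph d).Adj u v) : ∃ i, v = Function.update u i (!u i) := by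
  obtain ⟨i, hi, huniq⟩ := h
  refine ⟨i, funext fun j => ?_⟩
  rcases eq_or_ne j i with rfl | hj
  · simp only [Function.update_self]
    revert hi
    cases u j <;> cases v j <;> simp
  · rw [Function.update_of_ne hj]
    exact (not_not.mp fun hne => hj (huniq j hne)).symm

lemma hcClosure_subset_image (d : ℕ) (D : Set (Fin d → Bool)) :
    hcClosure d D ⊆ (fun p : (Fin d → Bool) × Option (Fin d) =>
      p.2.elim p.1 fun i => Function.update p.1 i (!p.1 i)) '' (D ×ˢ Set.univ) := by
  rintro v (hv | ⟨u, hu, hadj⟩)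
  · exact ⟨(v, none), ⟨hv, trivial⟩, rfl⟩
  · obtain ⟨i, rfl⟩ := hypercubeGraph.exists_eq_update_of_adj hadj
    exact ⟨(u, some i), ⟨hu, trivial⟩, rfl⟩

lemma ncard_hcClosure_le (d : ℕ) (D : Set (Fin d → Bool)) :
    (hcClosure d D).ncard ≤ (d + 1) * D.ncard :=
  calc (hcClosure d D).ncard
      ≤ (D ×ˢ (Set.univ : Set (Option (Fin d)))).ncard :=
        (Set.ncard_le_ncard (hcClosure_subset_image d D)).trans
          (Set.ncard_image_le (Set.toFinite _))
    _ = (d + 1) * D.ncard := by simp [Set.ncard_prod, mul_comm]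

lemma exists_eq_or_adj_of_inter_nonempty {d : ℕ} {C D : Set (Fin d → Bool)}
    (h : (hcClosure d C ∩ D).Nonempty) :
    ∃ x ∈ C, ∃ y ∈ D, x = y ∨ (hypercubeGraph d).Adj x y := by
  obtain ⟨w, hw | ⟨u, hu, hadj⟩, hwD⟩ := h
  · exact ⟨w, hw, w, hwD, Or.inl rfl⟩
  · exact ⟨u, hu, w, hwD, Or.inr hadj⟩

lemma ncard_add_ncard_le_of_disjoint {α : Type*} [Finite α] {s t : Set α} (h : Disjoint s t) :
    s.ncard + t.ncard ≤ Nat.card α := by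
  rw [← Set.ncard_union_eq h, ← Set.ncard_univ]
  exact Set.ncard_le_ncard (Set.subset_univ _)

lemma lt_add_of_one_sub_inv_sq_mul_le {t N a b c : ℝ} (ht : 2 < t) (hN : 0 < N)
    (ha : (1 - (t ^ 2)⁻¹) * N ≤ a) (hc : (1 - (t ^ 2)⁻¹) * N ≤ c) (hcb : c ≤ (t + 1) * b) :
    N < a + b := by
  have ht2 : 0 < t ^ 2 := by positivity
  have hfactor : 1 - (t ^ 2)⁻¹ = (t - 1) * (t + 1) / t ^ 2 := by field_simp; ring
  rw [hfactor, div_mul_eq_mul_div, div_le_iff₀ ht2] at ha hc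
  have hb : (t - 1) * N ≤ t ^ 2 * b := by
    refine le_of_mul_le_mul_left ?_ (by linarith : 0 < t + 1)
    nlinarith
  nlinarith

theorem stmt6_general (d : ℕ) (hd : 3 ≤ d) (K C D : Set (Fin d → Bool))
    (hC : C ⊆ K) (hD : D ⊆ K)
    (hCclos : (1 - ((d : ℝ) ^ 2)⁻¹) * 2 ^ d ≤ ((hcClosure d C).ncard : ℝ))
    (hDclos : (1 - ((d : ℝ) ^ 2)⁻¹) * 2 ^ d ≤ ((hcClosure d D).ncard : ℝ)) :
    ∃ x ∈ C, ∃ y ∈ D, ∃ (hx : x ∈ K) (hy : y ∈ K),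
      (SimpleGraph.induce K (hypercubeGraph d)).Reachable ⟨x, hx⟩ ⟨y, hy⟩ := by
  obtain ⟨x, hxC, y, hyD, hxy⟩ : ∃ x ∈ C, ∃ y ∈ D, x = y ∨ (hypercubeGraph d).Adj x y := by
    refine exists_eq_or_adj_of_inter_nonempty (Set.nonempty_iff_ne_empty.mpr fun hempty => ?_)
    have hsum := ncard_add_ncard_le_of_disjoint (Set.disjoint_iff_inter_eq_empty.mpr hempty)
    simp only [Nat.card_eq_fintype_card, Fintype.card_fun, Fintype.card_bool,
      Fintype.card_fin] at hsum
    have hDcard : ((hcClosure d D).ncard : ℝ) ≤ (d + 1) * D.ncard := by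
      exact_mod_cast ncard_hcClosure_le d D
    have hlt := lt_add_of_one_sub_inv_sq_mul_le (by exact_mod_cast hd) (by positivity)
      hCclos hDclos hDcard
    exact absurd hsum (by exact_mod_cast hlt.not_ge)
  refine ⟨x, hxC, y, hyD, hC hxC, hD hyD, ?_⟩
  rcases hxy with rfl | hadj
  · rfl
  · exact SimpleGraph.Adj.reachable (G := SimpleGraph.induce K (hypercubeGraph d)) hadj

/-- Uniqueness of the giant component: two subsets of `K ⊆ {0,1}^d` whose closures each
contain at least `(1 - d⁻²)2^d` vertices are joined by a path inside `K`. -/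
theorem stmt6 (d : ℕ) (hd : 3 ≤ d) (K C D : Set (Fin d → Bool))
    (hC : C ⊆ K) (hD : D ⊆ K) (hCne : C.Nonempty) (hDne : D.Nonempty)
    (hCclos : (1 - ((d : ℝ) ^ 2)⁻¹) * 2 ^ d ≤ ((hcClosure d C).ncard : ℝ))
    (hDclos : (1 - ((d : ℝ) ^ 2)⁻¹) * 2 ^ d ≤ ((hcClosure d D).ncard : ℝ)) :
    ∃ x ∈ C, ∃ y ∈ D, ∃ (hx : x ∈ K) (hy : y ∈ K),
      (SimpleGraph.induce K (hypercubeGraph d)).Reachable ⟨x, hx⟩ ⟨y, hy⟩ :=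
  stmt6_general d hd K C D hC hD hCclos hDclos
end

section
/- Let d ≥ 1 and let L₀, l be positive integers with l ≥ 4; set L = l·L₀. Suppose E ⊆ ℤ^d is such that there is a nearest-neighbor path with all its vertices in E whose first vertex lies in B_∞(0, L) and whose last vertex lies in S_∞(0, 3L). Then there exist x₁ ∈ L₀·ℤ^d with |x₁|_∞ = L and x₂ ∈ L₀·ℤ^d with |x₂|_∞ = 2L such that for each i ∈ {1, 2} there is a nearest-neighbor path with all its vertices in E whose first vertex lies in B_∞(x_i, L₀) and whose last vertex lies in S_∞(x_i, 3L₀). -/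
/-!
Along a nearest-neighbor path `|p i - x|_∞` grows by at most one per step, so a discrete
intermediate value argument stops the path on `S_∞(0, L)` and on `S_∞(0, 2L)`. Rounding such a
point `y` coordinatewise towards zero to a multiple of `L₀` gives `x ∈ L₀·ℤ^d` with
`|x|_∞ = |y|_∞` and `|y - x|_∞ < L₀`. From there the path still reaches `S_∞(0, 3L)`, hence
gets at least `3L₀` away from `x` because `2L + 3L₀ ≤ 3L`, and the same intermediate value
argument stops it on `S_∞(x, 3L₀)`.
-/

/-- The `ℓ^∞`-norm of a point of `ℤ^d`. -/
def normInf {d : ℕ} (x : Fin d → ℤ) : ℕ := Finset.univ.sup fun i => (x i).natAbs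

/-- The `ℓ¹`-norm of a point of `ℤ^d`. -/
def norm1 {d : ℕ} (x : Fin d → ℤ) : ℕ := ∑ i, (x i).natAbs

/-- `p 0, p 1, …, p n` is a nearest-neighbor path all of whose vertices lie in `E`. -/
def IsNNPathIn {d : ℕ} (E : Set (Fin d → ℤ)) (p : ℕ → (Fin d → ℤ)) (n : ℕ) : Prop :=
  (∀ i < n, norm1 (p (i + 1) - p i) = 1) ∧ ∀ i ≤ n, p i ∈ E

lemma natAbs_le_normInf {d : ℕ} (x : Fin d → ℤ) (i : Fin d) : (x i).natAbs ≤ normInf x :=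
  Finset.le_sup (f := fun j => (x j).natAbs) (Finset.mem_univ i)

lemma normInf_le_norm1 {d : ℕ} (x : Fin d → ℤ) : normInf x ≤ norm1 x :=
  Finset.sup_le fun i _ =>
    Finset.single_le_sum (f := fun j => (x j).natAbs) (fun _ _ => Nat.zero_le _)
      (Finset.mem_univ i)

lemma normInf_add_le {d : ℕ} (x y : Fin d → ℤ) : normInf (x + y) ≤ normInf x + normInf y :=
  Finset.sup_le fun i _ =>
    (Int.natAbs_add_le (x i) (y i)).trans
      (Nat.add_le_add (natAbs_le_normInf x i) (natAbs_le_normInf y i))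

lemma exists_lattice_point_normInf_eq {d L₀ : ℕ} (hL₀ : 0 < L₀) (y : Fin d → ℤ)
    (hy : L₀ ∣ normInf y) :
    ∃ x : Fin d → ℤ, (∀ i, (L₀ : ℤ) ∣ x i) ∧ normInf x = normInf y ∧ normInf (y - x) < L₀ := by
  refine ⟨fun i => (y i).tdiv L₀ * L₀, fun i => dvd_mul_left _ _, ?_, ?_⟩
  · have hround : Monotone fun a : ℕ => a / L₀ * L₀ := fun a b hab =>
      Nat.mul_le_mul_right _ (Nat.div_le_div_right hab)
    have hcoord : ∀ i, ((y i).tdiv L₀ * L₀).natAbs = (y i).natAbs / L₀ * L₀ := fun i => by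
      rw [Int.natAbs_mul, Int.natAbs_tdiv, Int.natAbs_natCast]; rfl
    calc normInf (fun i => (y i).tdiv L₀ * L₀)
        = Finset.univ.sup ((fun a : ℕ => a / L₀ * L₀) ∘ fun i => (y i).natAbs) :=
          Finset.sup_congr rfl fun i _ => hcoord i
      _ = normInf y / L₀ * L₀ :=
          (Finset.apply_sup_eq_sup_comp_of_linearOrder _ hround (by simp)).symm
      _ = normInf y := Nat.div_mul_cancel hy
  · have hrem : ∀ i, (y i - (y i).tdiv L₀ * L₀).natAbs = (y i).natAbs % L₀ := fun i => by
      rw [← eq_sub_of_add_eq (Int.tmod_add_tdiv_mul (y i) L₀), Int.natAbs_tmod,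
        Int.natAbs_natCast]
    refine (Finset.sup_lt_iff hL₀).2 fun i _ => ?_
    simpa only [Pi.sub_apply, hrem] using Nat.mod_lt _ hL₀

lemma exists_eq_of_succ_le_add_one {f : ℕ → ℕ} {t : ℕ} :
    ∀ {n : ℕ}, (∀ i < n, f (i + 1) ≤ f i + 1) → f 0 ≤ t → t ≤ f n → ∃ m ≤ n, f m = t
  | 0, _, h0, hn => ⟨0, le_rfl, le_antisymm h0 hn⟩
  | n + 1, hf, h0, hn => by
    by_cases ht : t ≤ f n
    · obtain ⟨m, hm, hfm⟩ := exists_eq_of_succ_le_add_one (fun i hi => hf i (by omega)) h0 ht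
      exact ⟨m, by omega, hfm⟩
    · exact ⟨n + 1, le_rfl, by have := hf n n.lt_succ_self; omega⟩

namespace IsNNPathIn

variable {d : ℕ} {E : Set (Fin d → ℤ)} {p : ℕ → Fin d → ℤ} {n : ℕ}

lemma mono (hp : IsNNPathIn E p n) {k : ℕ} (hk : k ≤ n) : IsNNPathIn E p k :=
  ⟨fun i hi => hp.1 i (by omega), fun i hi => hp.2 i (by omega)⟩

lemma shift (hp : IsNNPathIn E p n) {m : ℕ} (hm : m ≤ n) :
    IsNNPathIn E (fun i => p (m + i)) (n - m) :=
  ⟨fun i hi => hp.1 (m + i) (by omega), fun i hi => hp.2 (m + i) (by omega)⟩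

lemma normInf_sub_succ_le (hp : IsNNPathIn E p n) (x : Fin d → ℤ) {i : ℕ} (hi : i < n) :
    normInf (p (i + 1) - x) ≤ normInf (p i - x) + 1 :=
  calc normInf (p (i + 1) - x) = normInf ((p i - x) + (p (i + 1) - p i)) := by abel_nf
    _ ≤ normInf (p i - x) + normInf (p (i + 1) - p i) := normInf_add_le _ _
    _ ≤ normInf (p i - x) + 1 := Nat.add_le_add_left ((normInf_le_norm1 _).trans_eq (hp.1 i hi)) _

lemma exists_normInf_sub_eq (hp : IsNNPathIn E p n) (x : Fin d → ℤ) {t : ℕ}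
    (h0 : normInf (p 0 - x) ≤ t) (hn : t ≤ normInf (p n - x)) :
    ∃ m ≤ n, normInf (p m - x) = t :=
  exists_eq_of_succ_le_add_one (f := fun i => normInf (p i - x))
    (fun _ hi => hp.normInf_sub_succ_le x hi) h0 hn

lemma exists_lattice_crossing {L₀ : ℕ} (hL₀ : 0 < L₀) (hp : IsNNPathIn E p n) {m : ℕ}
    (hm : m ≤ n) (hdvd : L₀ ∣ normInf (p m)) (hend : normInf (p m) + 3 * L₀ ≤ normInf (p n)) :
    ∃ x : Fin d → ℤ, (∀ i, (L₀ : ℤ) ∣ x i) ∧ normInf x = normInf (p m) ∧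
      ∃ (q : ℕ → Fin d → ℤ) (k : ℕ), IsNNPathIn E q k ∧
        normInf (q 0 - x) ≤ L₀ ∧ normInf (q k - x) = 3 * L₀ := by
  obtain ⟨x, hx, hxnorm, hclose⟩ := exists_lattice_point_normInf_eq hL₀ (p m) hdvd
  have hfar : normInf (p n) ≤ normInf (p n - x) + normInf x := by
    simpa using normInf_add_le (p n - x) x
  obtain ⟨k, hk, hqk⟩ := (hp.shift hm).exists_normInf_sub_eq x (t := 3 * L₀)
    (by simp only [add_zero]; omega) (by rw [Nat.add_sub_cancel' hm]; omega)
  exact ⟨x, hx, hxnorm, _, k, (hp.shift hm).mono hk, by simp only [add_zero]; omega, hqk⟩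

end IsNNPathIn

theorem stmt7_general (d L₀ l : ℕ) (hL₀ : 1 ≤ L₀) (hl : 4 ≤ l)
    (E : Set (Fin d → ℤ))
    (hpath : ∃ (p : ℕ → (Fin d → ℤ)) (n : ℕ), IsNNPathIn E p n ∧
      normInf (p 0) ≤ l * L₀ ∧ normInf (p n) = 3 * (l * L₀)) :
    ∃ x₁ x₂ : Fin d → ℤ,
      (∀ i, (L₀ : ℤ) ∣ x₁ i) ∧ normInf x₁ = l * L₀ ∧
      (∀ i, (L₀ : ℤ) ∣ x₂ i) ∧ normInf x₂ = 2 * (l * L₀) ∧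
      (∃ (p : ℕ → (Fin d → ℤ)) (n : ℕ), IsNNPathIn E p n ∧
        normInf (p 0 - x₁) ≤ L₀ ∧ normInf (p n - x₁) = 3 * L₀) ∧
      (∃ (p : ℕ → (Fin d → ℤ)) (n : ℕ), IsNNPathIn E p n ∧
        normInf (p 0 - x₂) ≤ L₀ ∧ normInf (p n - x₂) = 3 * L₀) := by
  obtain ⟨p, n, hp, h0, hn⟩ := hpath
  have crossing_at : ∀ k, 1 ≤ k → k ≤ 2 → ∃ x : Fin d → ℤ,
      (∀ i, (L₀ : ℤ) ∣ x i) ∧ normInf x = k * (l * L₀) ∧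
      ∃ (q : ℕ → Fin d → ℤ) (n' : ℕ), IsNNPathIn E q n' ∧
        normInf (q 0 - x) ≤ L₀ ∧ normInf (q n' - x) = 3 * L₀ := by
    intro k hk₁ hk₂
    obtain ⟨m, hm, hpm⟩ := hp.exists_normInf_sub_eq 0 (t := k * (l * L₀))
      (by rw [sub_zero]; nlinarith) (by rw [sub_zero]; nlinarith)
    rw [sub_zero] at hpm
    obtain ⟨x, hx, hxnorm, hcross⟩ := hp.exists_lattice_crossing hL₀ hm
      (hpm ▸ ⟨k * l, by ring⟩) (by rw [hpm, hn]; nlinarith)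
    exact ⟨x, hx, hxnorm.trans hpm, hcross⟩
  obtain ⟨x₁, hx₁, hnorm₁, hcross₁⟩ := crossing_at 1 le_rfl one_le_two
  obtain ⟨x₂, hx₂, hnorm₂, hcross₂⟩ := crossing_at 2 one_le_two le_rfl
  exact ⟨x₁, x₂, hx₁, hnorm₁.trans (one_mul _), hx₂, hnorm₂, hcross₁, hcross₂⟩

/-- One-step crossing decomposition (3.6)-(3.7): a crossing of `E` from `B_∞(0,L)` to
`S_∞(0,3L)`, with `L = l·L₀`, forces crossings from `B_∞(x_i, L₀)` to `S_∞(x_i, 3L₀)` for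
points `x₁, x₂` of the renormalized lattice `L₀·ℤ^d` with `|x₁|_∞ = L` and `|x₂|_∞ = 2L`. -/
theorem stmt7 (d L₀ l : ℕ) (hd : 1 ≤ d) (hL₀ : 1 ≤ L₀) (hl : 4 ≤ l)
    (E : Set (Fin d → ℤ))
    (hpath : ∃ (p : ℕ → (Fin d → ℤ)) (n : ℕ), IsNNPathIn E p n ∧
      normInf (p 0) ≤ l * L₀ ∧ normInf (p n) = 3 * (l * L₀)) :
    ∃ x₁ x₂ : Fin d → ℤ,
      (∀ i, (L₀ : ℤ) ∣ x₁ i) ∧ normInf x₁ = l * L₀ ∧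
      (∀ i, (L₀ : ℤ) ∣ x₂ i) ∧ normInf x₂ = 2 * (l * L₀) ∧
      (∃ (p : ℕ → (Fin d → ℤ)) (n : ℕ), IsNNPathIn E p n ∧
        normInf (p 0 - x₁) ≤ L₀ ∧ normInf (p n - x₁) = 3 * L₀) ∧
      (∃ (p : ℕ → (Fin d → ℤ)) (n : ℕ), IsNNPathIn E p n ∧
        normInf (p 0 - x₂) ≤ L₀ ∧ normInf (p n - x₂) = 3 * L₀) :=
  stmt7_general d L₀ l hL₀ hl E hpath
end

section
/- Let d ≥ 3 and 1 ≤ b ≤ d be integers, and for 1 ≤ k ≤ b set I_k = {(k-1)·⌊d/b⌋ + 1, …, k·⌊d/b⌋} ⊆ {1, …, d}. Let 𝕋 = { e_{i₁} + ⋯ + e_{i_j} : 1 ≤ j ≤ b and i_k ∈ I_k for all 1 ≤ k ≤ j } ⊆ {0,1}^d ⊆ ℤ^d, where e_i is the i-th standard unit vector, and 𝕋₀ = 𝕋 ∪ {0}. Let m ≥ 1 be an integer and let ω ⊆ 𝕋 be such that for every x = e_{i₁} + ⋯ + e_{i_j} ∈ 𝕋₀ with 0 ≤ j ≤ b - 1,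 at least m of the points x + e_i with i ∈ I_{j+1} belong to ω. Then there exists i ∈ I₁ with e_i ∈ ω such that the connected component of e_i in the subgraph of ℤ^d (with nearest-neighbor adjacency) induced on ω contains at least m^{b-1} vertices. -/
/-- The nearest-neighbor lattice graph on `ℤ^d`. -/
def latticeGraph (d : ℕ) : SimpleGraph (Fin d → ℤ) where
  Adj x y := norm1 (x - y) = 1
  symm := by
    constructor
    intro x y hxy
    beta_reduce at hxy ⊢
    unfold norm1 at hxy ⊢
    calc ∑ i, ((y - x) i).natAbs
        = ∑ i, ((x - y) i).natAbs := by
          refine Finset.sum_congr rfl fun i _ => ?_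
          rw [Pi.sub_apply, Pi.sub_apply, ← Int.natAbs_neg, neg_sub]
      _ = 1 := hxy
  loopless := by
    constructor
    intro x hx
    simp [norm1] at hx

/-- The `i`-th standard unit vector of `ℤ^d`, `1 ≤ i ≤ d` (1-based indexing). -/
def unitVec (d : ℕ) (i : ℕ) : Fin d → ℤ := fun t => if (t : ℕ) + 1 = i then 1 else 0

/-! Grow the tree from `e_{i₁}` through open vertices only: every vertex reached is joined to
`e_{i₁}` by an open path. Later generations only add unit vectors from later blocks `I_k`, so the
descendants of two distinct children `x + e_s`, `x + e_{s'}` of `x` still differ in coordinate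
`s`. Hence the descendant sets of distinct children are disjoint, and with at least `m` open
children per vertex, a vertex has at least `m^r` open descendants `r` generations below it. -/

open Finset

variable {d : ℕ}

lemma latticeGraph_adj_add_unitVec (x : Fin d → ℤ) {i : ℕ} (hi₁ : 1 ≤ i) (hid : i ≤ d) :
    (latticeGraph d).Adj x (x + unitVec d i) := by
  have habs : ∀ t : Fin d, ((x - (x + unitVec d i)) t).natAbs =
      if (⟨i - 1, by omega⟩ : Fin d) = t then 1 else 0 := by
    intro t
    simp only [Pi.sub_apply, Pi.add_apply, sub_add_cancel_left, Int.natAbs_neg, unitVec,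
      Fin.ext_iff]
    split_ifs <;> first | rfl | omega
  simp only [latticeGraph, norm1, habs, sum_ite_eq, mem_univ, if_true]

lemma unitVec_eq_zero {i : ℕ} (hi : ¬(1 ≤ i ∧ i ≤ d)) : unitVec d i = 0 := by
  funext t
  simp only [unitVec, Pi.zero_apply, ite_eq_right_iff, one_ne_zero]
  omega

lemma induce_latticeGraph_reachable_add_unitVec {ω : Set (Fin d → ℤ)} {x : Fin d → ℤ}
    {i : ℕ} (hx : x ∈ ω) (hy : x + unitVec d i ∈ ω) :
    ((latticeGraph d).induce ω).Reachable ⟨x, hx⟩ ⟨x + unitVec d i, hy⟩ := by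
  by_cases hi : 1 ≤ i ∧ i ≤ d
  · exact SimpleGraph.Adj.reachable (latticeGraph_adj_add_unitVec x hi.1 hi.2)
  · have hxy : (⟨x + unitVec d i, hy⟩ : ω) = ⟨x, hx⟩ :=
      Subtype.ext (by simp only [unitVec_eq_zero hi, add_zero])
    rw [hxy]

lemma sum_unitVec_mem_Icc {ι : Type*} (s : Finset ι) (i : ι → ℕ) :
    ∑ k ∈ s, unitVec d (i k) ∈ Set.Icc 0 (fun _ => (#s : ℤ)) := by
  have hbit : ∀ k t, unitVec d (i k) t ∈ Set.Icc (0 : ℤ) 1 := by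
    intro k t
    unfold unitVec
    split_ifs <;> simp
  refine ⟨fun t => ?_, fun t => ?_⟩
  · simpa only [Finset.sum_apply, Pi.zero_apply] using sum_nonneg fun k _ => (hbit k t).1
  · simpa only [Finset.sum_apply, nsmul_eq_mul, mul_one] using
      sum_le_card_nsmul s _ 1 fun k _ => (hbit k t).2

/-- The vertices `e_{i₁} + ⋯ + e_{i_j}`, `i_k ∈ I_k`, of generation `j` of the tree, where
`I_k = {(k-1)q+1, …, kq}`. -/
def IsTreeVertex (d q j : ℕ) (x : Fin d → ℤ) : Prop :=
  ∃ i : ℕ → ℕ, (∀ k ∈ Icc 1 j, i k ∈ Icc ((k - 1) * q + 1) (k * q)) ∧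
    x = ∑ k ∈ Icc 1 j, unitVec d (i k)

lemma isTreeVertex_zero (q : ℕ) : IsTreeVertex d q 0 0 :=
  ⟨fun _ => 0, by simp, by simp⟩

lemma IsTreeVertex.add_unitVec {q j : ℕ} {x : Fin d → ℤ} (hx : IsTreeVertex d q j x) {s : ℕ}
    (hs : s ∈ Icc (j * q + 1) ((j + 1) * q)) : IsTreeVertex d q (j + 1) (x + unitVec d s) := by
  obtain ⟨i, hi, rfl⟩ := hx
  have hlow : ∀ k ∈ Icc 1 j, Function.update i (j + 1) s k = i k := fun k hk =>
    Function.update_of_ne (by simp only [mem_Icc] at hk; omega) _ _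
  refine ⟨Function.update i (j + 1) s, fun k hk => ?_, ?_⟩
  · rcases eq_or_ne k (j + 1) with rfl | hkj
    · simpa using hs
    · rw [Function.update_of_ne hkj]
      exact hi k (by simp only [mem_Icc] at hk ⊢; omega)
  · rw [sum_Icc_succ_top (by omega), Function.update_self]
    exact congrArg (· + _) (sum_congr rfl fun k hk => by rw [hlow k hk])

lemma IsTreeVertex.mem_Icc {q j : ℕ} {x : Fin d → ℤ} (hx : IsTreeVertex d q j x) :
    x ∈ Set.Icc 0 (fun _ => (j : ℤ)) := by
  obtain ⟨i, -, rfl⟩ := hx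
  simpa using sum_unitVec_mem_Icc (Icc 1 j) i

section Descendants

variable (ω : Set (Fin d → ℤ)) (q : ℕ)

/-- The labels `t ∈ I_{j+1}` of the children `x + e_t` of `x` that lie in `ω`, with `x` in
generation `j`. -/
noncomputable def openSteps (j : ℕ) (x : Fin d → ℤ) : Finset ℕ :=
  @Finset.filter _ (fun t => x + unitVec d t ∈ ω) (Classical.decPred _)
    (Icc (j * q + 1) ((j + 1) * q))

/-- The descendants `r` generations below `x` (of generation `j`) reached through `ω`. -/
noncomputable def openDescendants : ℕ → ℕ → (Fin d → ℤ) → Finset (Fin d → ℤ)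
  | 0, _, x => {x}
  | r + 1, j, x => (openSteps ω q j x).biUnion fun t =>
      openDescendants r (j + 1) (x + unitVec d t)

variable {ω q}

lemma mem_openSteps {j t : ℕ} {x : Fin d → ℤ} :
    t ∈ openSteps ω q j x ↔ t ∈ Icc (j * q + 1) ((j + 1) * q) ∧ x + unitVec d t ∈ ω :=
  @mem_filter _ _ (Classical.decPred _) _ _

lemma exists_reachable_of_mem_openDescendants {r j : ℕ} {x y : Fin d → ℤ} (hx : x ∈ ω)
    (hy : y ∈ openDescendants ω q r j x) :
    ∃ hy : y ∈ ω, ((latticeGraph d).induce ω).Reachable ⟨x, hx⟩ ⟨y, hy⟩ := by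
  induction r generalizing j x with
  | zero =>
    obtain rfl := mem_singleton.mp hy
    exact ⟨hx, .rfl⟩
  | succ r ih =>
    obtain ⟨t, ht, hy⟩ := mem_biUnion.mp hy
    have hxt := (mem_openSteps.mp ht).2
    obtain ⟨hyω, hreach⟩ := ih hxt hy
    exact ⟨hyω, (induce_latticeGraph_reachable_add_unitVec hx hxt).trans hreach⟩

lemma apply_eq_of_mem_openDescendants {r j : ℕ} {x y : Fin d → ℤ}
    (hy : y ∈ openDescendants ω q r j x) {t : Fin d} (ht : (t : ℕ) < j * q) : y t = x t := by
  induction r generalizing j x with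
  | zero => rw [mem_singleton.mp hy]
  | succ r ih =>
    obtain ⟨s, hs, hy⟩ := mem_biUnion.mp hy
    have hjs := (mem_Icc.mp (mem_openSteps.mp hs).1).1
    have hlt : (t : ℕ) < (j + 1) * q := by rw [add_one_mul]; omega
    rw [ih hy hlt, Pi.add_apply, add_eq_left]
    simp only [unitVec, ite_eq_right_iff, one_ne_zero]
    omega

lemma disjoint_openDescendants_add_unitVec {r j : ℕ} (x : Fin d → ℤ) {s s' : ℕ}
    (hs : s ∈ Icc (j * q + 1) ((j + 1) * q)) (hss' : s ≠ s') (hqd : (j + 1) * q ≤ d) :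
    Disjoint (openDescendants ω q r (j + 1) (x + unitVec d s))
      (openDescendants ω q r (j + 1) (x + unitVec d s')) := by
  simp only [mem_Icc] at hs
  let t : Fin d := ⟨s - 1, by omega⟩
  have ht : (t : ℕ) < (j + 1) * q := by simp only [t]; omega
  refine disjoint_left.mpr fun y hy hy' => ?_
  have h := (apply_eq_of_mem_openDescendants hy ht).symm.trans
    (apply_eq_of_mem_openDescendants hy' ht)
  simp only [t, unitVec, Pi.add_apply] at h
  split_ifs at h <;> omega

lemma pow_le_card_openDescendants {m r j : ℕ}
    (hsteps : ∀ j', j ≤ j' → j' < j + r → ∀ x, IsTreeVertex d q j' x →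
      m ≤ #(openSteps ω q j' x))
    (hqd : (j + r) * q ≤ d) {x : Fin d → ℤ} (hx : IsTreeVertex d q j x) :
    m ^ r ≤ #(openDescendants ω q r j x) := by
  induction r generalizing j x with
  | zero => simp [openDescendants]
  | succ r ih =>
    have hchild : ∀ t ∈ openSteps ω q j x,
        m ^ r ≤ #(openDescendants ω q r (j + 1) (x + unitVec d t)) := fun t ht =>
      ih (fun j' hj' hj'r => hsteps j' (by omega) (by omega)) (by rwa [add_right_comm])
        (hx.add_unitVec (mem_openSteps.mp ht).1)
    have hqd' : (j + 1) * q ≤ d :=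
      (Nat.mul_le_mul_right q (by omega)).trans hqd
    calc m ^ (r + 1) = m * m ^ r := pow_succ' m r
      _ ≤ #(openSteps ω q j x) * m ^ r :=
          Nat.mul_le_mul_right _ (hsteps j le_rfl (by omega) x hx)
      _ ≤ ∑ t ∈ openSteps ω q j x, #(openDescendants ω q r (j + 1) (x + unitVec d t)) :=
          card_nsmul_le_sum _ _ _ hchild
      _ = #(openDescendants ω q (r + 1) j x) :=
          (card_biUnion fun t ht t' ht' htt' => disjoint_openDescendants_add_unitVec x
            (mem_openSteps.mp ht).1 htt' hqd').symm

end Descendants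

theorem stmt13_general (d b m : ℕ) (hm : 1 ≤ m)
    (ω : Set (Fin d → ℤ))
    (hω : ω ⊆ {x | ∃ j, 1 ≤ j ∧ j ≤ b ∧ ∃ i : ℕ → ℕ,
      (∀ k ∈ Finset.Icc 1 j, i k ∈ Finset.Icc ((k - 1) * (d / b) + 1) (k * (d / b))) ∧
      x = ∑ k ∈ Finset.Icc 1 j, unitVec d (i k)})
    (hchild : ∀ j : ℕ, j ≤ b - 1 → ∀ i : ℕ → ℕ,
      (∀ k ∈ Finset.Icc 1 j, i k ∈ Finset.Icc ((k - 1) * (d / b) + 1) (k * (d / b))) →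
      m ≤ (@Finset.filter _
        (fun t => (∑ k ∈ Finset.Icc 1 j, unitVec d (i k)) + unitVec d t ∈ ω)
        (Classical.decPred _)
        (Finset.Icc (j * (d / b) + 1) ((j + 1) * (d / b)))).card) :
    ∃ i ∈ Finset.Icc 1 (d / b), ∃ hi : unitVec d i ∈ ω,
      m ^ (b - 1) ≤ {y : Fin d → ℤ | ∃ hy : y ∈ ω,
        (SimpleGraph.induce ω (latticeGraph d)).Reachable
          ⟨unitVec d i, hi⟩ ⟨y, hy⟩}.ncard := by
  have hsteps : ∀ j ≤ b - 1, ∀ x, IsTreeVertex d (d / b) j x →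
      m ≤ #(openSteps ω (d / b) j x) := by
    rintro j hj x ⟨i, hi, rfl⟩
    exact hchild j hj i hi
  obtain ⟨i₁, hi₁⟩ : (openSteps ω (d / b) 0 0).Nonempty :=
    card_pos.mp (hm.trans (hsteps 0 (Nat.zero_le _) 0 (isTreeVertex_zero _)))
  obtain ⟨hI₁, hi₁ω⟩ := mem_openSteps.mp hi₁
  have htree : IsTreeVertex d (d / b) 1 (unitVec d i₁) := by
    simpa using (isTreeVertex_zero (d / b)).add_unitVec hI₁
  rw [zero_add] at hi₁ω
  refine ⟨i₁, by simpa using hI₁, hi₁ω, ?_⟩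
  -- `ncard` of an infinite set is `0`
  have hωfin : ω.Finite := (Set.finite_Icc 0 fun _ => (b : ℤ)).subset fun x hx => by
    obtain ⟨j, -, hjb, hxj⟩ := hω hx
    obtain ⟨hx₀, hxj⟩ := IsTreeVertex.mem_Icc hxj
    exact ⟨hx₀, hxj.trans fun _ => by simpa using hjb⟩
  have hqd : (1 + (b - 1)) * (d / b) ≤ d := by
    rcases Nat.eq_zero_or_pos b with rfl | hb
    · simp
    · rw [Nat.add_sub_of_le hb]
      exact Nat.mul_div_le d b
  calc m ^ (b - 1) ≤ #(openDescendants ω (d / b) (b - 1) 1 (unitVec d i₁)) :=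
        pow_le_card_openDescendants (fun j _ hj => hsteps j (by omega)) hqd htree
    _ ≤ _ := by
        rw [← Set.ncard_coe_finset]
        exact Set.ncard_le_ncard (fun y hy => exists_reachable_of_mem_openDescendants hi₁ω hy)
          (hωfin.subset fun y hy => hy.1)

/-- Deterministic tree-growth step from the proof of Theorem 4.4: if `ω` is a subset of
the embedded `⌊d/b⌋`-regular tree `𝕋 ⊆ {0,1}^d` of depth `b` such that every vertex of
`𝕋₀ = 𝕋 ∪ {0}` of generation at most `b-1` has at least `m` children in `ω`, then some
neighbor `e_i`, `i ∈ I₁`, of the origin lies in a connected component of `ω` (for the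
nearest-neighbor adjacency of `ℤ^d`) with at least `m^{b-1}` vertices. -/
theorem stmt13 (d b m : ℕ) (hd : 3 ≤ d) (hb1 : 1 ≤ b) (hbd : b ≤ d) (hm : 1 ≤ m)
    (ω : Set (Fin d → ℤ))
    (hω : ω ⊆ {x | ∃ j, 1 ≤ j ∧ j ≤ b ∧ ∃ i : ℕ → ℕ,
      (∀ k ∈ Finset.Icc 1 j, i k ∈ Finset.Icc ((k - 1) * (d / b) + 1) (k * (d / b))) ∧
      x = ∑ k ∈ Finset.Icc 1 j, unitVec d (i k)})
    (hchild : ∀ j : ℕ, j ≤ b - 1 → ∀ i : ℕ → ℕ,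
      (∀ k ∈ Finset.Icc 1 j, i k ∈ Finset.Icc ((k - 1) * (d / b) + 1) (k * (d / b))) →
      m ≤ (@Finset.filter _
        (fun t => (∑ k ∈ Finset.Icc 1 j, unitVec d (i k)) + unitVec d t ∈ ω)
        (Classical.decPred _)
        (Finset.Icc (j * (d / b) + 1) ((j + 1) * (d / b)))).card) :
    ∃ i ∈ Finset.Icc 1 (d / b), ∃ hi : unitVec d i ∈ ω,
      m ^ (b - 1) ≤ {y : Fin d → ℤ | ∃ hy : y ∈ ω,
        (SimpleGraph.induce ω (latticeGraph d)).Reachable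
          ⟨unitVec d i, hi⟩ ⟨y, hy⟩}.ncard :=
  stmt13_general d b m hm ω hω hchild
end
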